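/- arXiv:1911.13265 — 2 statements merged into one kernel-verified Lean document; each statement's English description precedes it below -/
import Mathlib

section
/- Let Φ(ξ₁,ξ₂,ξ₃) = (ξ₁+ξ₂+ξ₃)³ - ξ₁³ - ξ₂³ - ξ₃³. There exists a constant C > 0 such that for all N ≥ 1 and all real ξ₁, ξ₂, ξ₃ satisfying |ξ₁ - N - N^{-1/2}/2| < N^{-1/2}, |ξ₂ - N - N^{-1/2}/2| < N^{-1/2}, and |ξ₃ + N + N^{-1/2}/2| < N^{-1/2}, one has |Φ(ξ₁,ξ₂,ξ₃)| ≤ C. -/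
/-!
Φ factors as `3 (ξ₁ + ξ₂)(ξ₂ + ξ₃)(ξ₃ + ξ₁)`. On the box, `ξ₁ + ξ₂ = O(N)` while `ξ₂ + ξ₃` and
`ξ₃ + ξ₁` are `O(N^{-1/2})`, so the product is `O(N · N⁻¹) = O(1)`.
-/

open Real

def cubicResonance {R : Type*} [CommRing R] (ξ₁ ξ₂ ξ₃ : R) : R :=
  (ξ₁ + ξ₂ + ξ₃) ^ 3 - ξ₁ ^ 3 - ξ₂ ^ 3 - ξ₃ ^ 3

theorem cubicResonance_eq {R : Type*} [CommRing R] (ξ₁ ξ₂ ξ₃ : R) :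
    cubicResonance ξ₁ ξ₂ ξ₃ = 3 * (ξ₁ + ξ₂) * (ξ₂ + ξ₃) * (ξ₃ + ξ₁) := by
  unfold cubicResonance
  ring

theorem abs_add_le_of_abs_sub_le {x y p q r s : ℝ} (hx : |x - p| ≤ r) (hy : |y - q| ≤ s) :
    |x + y| ≤ |p + q| + (r + s) :=
  calc |x + y| = |(p + q) + ((x - p) + (y - q))| := by ring_nf
    _ ≤ |p + q| + (|x - p| + |y - q|) := (abs_add_le _ _).trans (by gcongr; exact abs_add_le _ _)
    _ ≤ |p + q| + (r + s) := by gcongr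

theorem abs_cubicResonance_le {ξ₁ ξ₂ ξ₃ c r : ℝ} (h₁ : |ξ₁ - c| ≤ r) (h₂ : |ξ₂ - c| ≤ r)
    (h₃ : |ξ₃ - -c| ≤ r) : |cubicResonance ξ₁ ξ₂ ξ₃| ≤ 24 * (|c| + r) * r ^ 2 := by
  have h₁₂ : |ξ₁ + ξ₂| ≤ 2 * (|c| + r) := by
    have := abs_add_le_of_abs_sub_le h₁ h₂
    rw [← two_mul, abs_mul, abs_two] at this
    linarith
  have h₂₃ : |ξ₂ + ξ₃| ≤ 2 * r := by
    simpa [two_mul] using abs_add_le_of_abs_sub_le h₂ h₃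
  have h₃₁ : |ξ₃ + ξ₁| ≤ 2 * r := by
    simpa [two_mul] using abs_add_le_of_abs_sub_le h₃ h₁
  have hr : 0 ≤ r := (abs_nonneg _).trans h₁
  calc |cubicResonance ξ₁ ξ₂ ξ₃|
      = 3 * |ξ₁ + ξ₂| * |ξ₂ + ξ₃| * |ξ₃ + ξ₁| := by
        rw [cubicResonance_eq, abs_mul, abs_mul, abs_mul, abs_of_pos three_pos]
    _ ≤ 3 * (2 * (|c| + r)) * (2 * r) * (2 * r) := by gcongr
    _ = 24 * (|c| + r) * r ^ 2 := by ring

theorem rpow_neg_one_half_sq {N : ℝ} (hN : 0 < N) : (N ^ (-(1 : ℝ) / 2)) ^ 2 = N⁻¹ := by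
  rw [← rpow_natCast, ← rpow_mul hN.le]
  norm_num [rpow_neg_one]

/-- boundedness of the resonance function
`Φ(ξ₁,ξ₂,ξ₃) = (ξ₁+ξ₂+ξ₃)³ - ξ₁³ - ξ₂³ - ξ₃³` on the near-resonant frequency box. -/
theorem resonance_function_bounded :
    ∃ C : ℝ, 0 < C ∧ ∀ N ξ₁ ξ₂ ξ₃ : ℝ, 1 ≤ N →
      |ξ₁ - N - N ^ (-(1 : ℝ) / 2) / 2| < N ^ (-(1 : ℝ) / 2) →
      |ξ₂ - N - N ^ (-(1 : ℝ) / 2) / 2| < N ^ (-(1 : ℝ) / 2) →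
      |ξ₃ + N + N ^ (-(1 : ℝ) / 2) / 2| < N ^ (-(1 : ℝ) / 2) →
      |(ξ₁ + ξ₂ + ξ₃) ^ 3 - ξ₁ ^ 3 - ξ₂ ^ 3 - ξ₃ ^ 3| ≤ C := by
  refine ⟨60, by norm_num, fun N ξ₁ ξ₂ ξ₃ hN h₁ h₂ h₃ => ?_⟩
  have hN₀ : 0 < N := one_pos.trans_le hN
  set m := N ^ (-(1 : ℝ) / 2)
  have hm₀ : 0 < m := rpow_pos_of_pos hN₀ _
  have hm₁ : m ≤ 1 := rpow_le_one_of_one_le_of_nonpos hN (by norm_num)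
  have hNm : N * m ^ 2 = 1 := by rw [rpow_neg_one_half_sq hN₀, mul_inv_cancel₀ hN₀.ne']
  have hc : |N + m / 2| = N + m / 2 := abs_of_pos (by positivity)
  have bound := abs_cubicResonance_le (c := N + m / 2) (r := m)
    (by rw [← sub_sub]; exact h₁.le) (by rw [← sub_sub]; exact h₂.le)
    (by rw [sub_neg_eq_add, ← add_assoc]; exact h₃.le)
  rw [hc] at bound
  calc |cubicResonance ξ₁ ξ₂ ξ₃| ≤ 24 * (N + m / 2 + m) * m ^ 2 := bound
    _ = 24 * (N * m ^ 2) + 36 * m ^ 3 := by ring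
    _ ≤ 60 := by rw [hNm]; nlinarith [pow_le_one₀ hm₀.le hm₁ (n := 3)]
end

section
/- Let f ∈ L²(ℝ³) be supported in the set { (τ,ξ,η) : |ξ| ∼ N, |η| ≤ M, |τ - ξ³ - η³| ≤ L } where N ≥ 1, M ≥ 1, L ≥ 1. Then the three-dimensional Lebesgue measure of this support set, intersected with any translate of the support of a second such function (with parameters L' in place of L), restricted to a ξ-interval where |3ξ₁² - 3(ξ-ξ₁)²| ≥ K, is at most C · M · min(L, L') · max(L, L')/K. Concretely: fix τ, ξ, η ∈ ℝ and define E = { (τ₁,ξ₁,η₁) : |τ₁ - ξ₁³ - η₁³| ≤ L, |τ-τ₁ - (ξ-ξ₁)³ - (η-η₁)³| ≤ L', |η₁| ≤ M, |3ξ₁² - 3(ξ-ξ₁)²| ≥ K }. Then |E| ≤ C M min(L,L') max(L,L')/K for an absolute constant C. -/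
/-!
Integrate out `τ₁` first: for fixed `(ξ₁, η₁)` both modulation conditions confine `τ₁` to an
interval of length `2 min(L, L')`, and such `(ξ₁, η₁)` satisfy
`|ξ₁³ + (ξ - ξ₁)³ + η₁³ + (η - η₁)³ - τ| ≤ L + L'`. For fixed `η₁` the map
`g(ξ₁) = ξ₁³ + (ξ - ξ₁)³` has derivative `3ξ₁² - 3(ξ - ξ₁)²` of modulus at least `K`; on each of the
two sets where this derivative has a fixed sign, the difference quotients of `g` are at least `K`
in modulus, so each set has diameter at most `2(L + L')/K`. Finally `|η₁| ≤ M` and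
`L + L' ≤ 2 max(L, L')`.
-/

open MeasureTheory

lemma volume_abs_sub_le_and_abs_sub_le (a b L L' : ℝ) :
    volume {t : ℝ | |t - a| ≤ L ∧ |t - b| ≤ L'} ≤ ENNReal.ofReal (2 * min L L') := by
  rw [mul_min_of_nonneg _ _ zero_le_two, ENNReal.ofReal_min, ← Real.volume_closedBall,
    ← Real.volume_closedBall]
  exact le_min (measure_mono fun t ht => ht.1) (measure_mono fun t ht => ht.2)

lemma Real.volume_le_of_mul_abs_sub_le {S : Set ℝ} (f : ℝ → ℝ) {B K : ℝ} (hK : 0 < K)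
    (hf : ∀ x ∈ S, |f x| ≤ B) (hexpand : ∀ x ∈ S, ∀ y ∈ S, K * |x - y| ≤ |f x - f y|) :
    volume S ≤ ENNReal.ofReal (2 * B / K) := by
  refine (Real.volume_le_diam S).trans (Metric.ediam_le_of_forall_dist_le fun x hx y hy => ?_)
  rw [Real.dist_eq, le_div_iff₀ hK, mul_comm]
  linarith [hexpand x hx y hy, abs_sub (f x) (f y), hf x hx, hf y hy]

/-- The difference quotient of `x ↦ x³ + (ξ - x)³` is the mean of its derivative at the two ends. -/
lemma mul_abs_sub_le_abs_sub_cubic {ξ x y K : ℝ}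
    (hx : K ≤ |3 * x ^ 2 - 3 * (ξ - x) ^ 2|) (hy : K ≤ |3 * y ^ 2 - 3 * (ξ - y) ^ 2|)
    (hsign : 0 ≤ (3 * x ^ 2 - 3 * (ξ - x) ^ 2) * (3 * y ^ 2 - 3 * (ξ - y) ^ 2)) :
    K * |x - y| ≤ |(x ^ 3 + (ξ - x) ^ 3) - (y ^ 3 + (ξ - y) ^ 3)| := by
  set a := 3 * x ^ 2 - 3 * (ξ - x) ^ 2
  set b := 3 * y ^ 2 - 3 * (ξ - y) ^ 2
  have hmean : (x ^ 3 + (ξ - x) ^ 3) - (y ^ 3 + (ξ - y) ^ 3) = (x - y) * ((a + b) / 2) := by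
    simp only [a, b]; ring
  have hab : |a + b| = |a| + |b| := (abs_add_eq_add_abs_iff a b).2 (mul_nonneg_iff.1 hsign)
  rw [hmean, abs_mul, abs_div, hab, abs_two, mul_comm K]
  gcongr
  linarith

lemma volume_cubic_sublevel_le (ξ d B K : ℝ) (hB : 0 ≤ B) (hK : 0 < K) :
    volume {x : ℝ | |x ^ 3 + (ξ - x) ^ 3 + d| ≤ B ∧ K ≤ |3 * x ^ 2 - 3 * (ξ - x) ^ 2|} ≤
      ENNReal.ofReal (4 * B / K) := by
  set S := {x : ℝ | |x ^ 3 + (ξ - x) ^ 3 + d| ≤ B ∧ K ≤ |3 * x ^ 2 - 3 * (ξ - x) ^ 2|}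
  set f : ℝ → ℝ := fun x => x ^ 3 + (ξ - x) ^ 3 + d
  have hpart : ∀ P : ℝ → Prop,
      (∀ x, P x → ∀ y, P y → 0 ≤ (3 * x ^ 2 - 3 * (ξ - x) ^ 2) * (3 * y ^ 2 - 3 * (ξ - y) ^ 2)) →
      volume (S ∩ {x | P x}) ≤ ENNReal.ofReal (2 * B / K) := by
    refine fun P hP => Real.volume_le_of_mul_abs_sub_le f hK (fun x hx => hx.1.1)
      fun x hx y hy => ?_
    rw [add_sub_add_right_eq_sub]
    exact mul_abs_sub_le_abs_sub_cubic hx.1.2 hy.1.2 (hP x hx.2 y hy.2)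
  calc volume S
      ≤ volume (S ∩ {x | 0 ≤ 3 * x ^ 2 - 3 * (ξ - x) ^ 2} ∪
          S ∩ {x | 3 * x ^ 2 - 3 * (ξ - x) ^ 2 ≤ 0}) :=
        measure_mono fun x hx => (le_total 0 (3 * x ^ 2 - 3 * (ξ - x) ^ 2)).imp (⟨hx, ·⟩) (⟨hx, ·⟩)
    _ ≤ ENNReal.ofReal (2 * B / K) + ENNReal.ofReal (2 * B / K) :=
        (measure_union_le _ _).trans <| add_le_add
          (hpart _ fun _ hx _ hy => mul_nonneg hx hy)
          (hpart _ fun _ hx _ hy => mul_nonneg_of_nonpos_of_nonpos hx hy)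
    _ = ENNReal.ofReal (4 * B / K) := by
        rw [← ENNReal.ofReal_add (by positivity) (by positivity)]
        ring_nf

lemma MeasureTheory.Measure.prod_le_mul_of_slice_le {α β : Type*} [MeasurableSpace α]
    [MeasurableSpace β] {μ : Measure α} {ν : Measure β} [SFinite μ] [SFinite ν]
    {E : Set (α × β)} {A : Set β} {c : ENNReal} (hE : MeasurableSet E) (hEA : E ⊆ Prod.snd ⁻¹' A)
    (hslice : ∀ b ∈ A, μ ((fun a => (a, b)) ⁻¹' E) ≤ c) :
    μ.prod ν E ≤ c * ν A := by
  rw [Measure.prod_apply_symm hE]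
  refine (lintegral_mono fun b => ?_).trans (lintegral_indicator_const_le A c)
  by_cases hb : b ∈ A
  · rw [Set.indicator_of_mem hb]
    exact hslice b hb
  · have hempty : (fun a => (a, b)) ⁻¹' E = ∅ :=
      Set.eq_empty_of_forall_notMem fun a ha => hb (hEA ha)
    rw [hempty, measure_empty]
    exact zero_le

def resonanceSet (ξ η τ B M K : ℝ) : Set (ℝ × ℝ) :=
  {q | |q.1 ^ 3 + (ξ - q.1) ^ 3 + (q.2 ^ 3 + (η - q.2) ^ 3 - τ)| ≤ B ∧
    |q.2| ≤ M ∧ K ≤ |3 * q.1 ^ 2 - 3 * (ξ - q.1) ^ 2|}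

lemma measurableSet_resonanceSet (ξ η τ B M K : ℝ) :
    MeasurableSet (resonanceSet ξ η τ B M K) :=
  measurableSet_setOfPred.2 (by fun_prop)

lemma volume_resonanceSet_le (ξ η τ B M K : ℝ) (hB : 0 ≤ B) (hK : 0 < K) :
    volume (resonanceSet ξ η τ B M K) ≤ ENNReal.ofReal (4 * B / K) * ENNReal.ofReal (2 * M) := by
  have hIcc : volume (Set.Icc (-M) M) = ENNReal.ofReal (2 * M) := by
    rw [Real.volume_Icc]; ring_nf
  rw [Measure.volume_eq_prod, ← hIcc]
  refine Measure.prod_le_mul_of_slice_le (measurableSet_resonanceSet ξ η τ B M K)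
    (fun q hq => abs_le.1 hq.2.1) fun y _ => ?_
  refine (measure_mono ?_).trans (volume_cubic_sublevel_le ξ (y ^ 3 + (η - y) ^ 3 - τ) B K hB hK)
  exact fun x hx => ⟨hx.1, hx.2.2⟩

lemma volume_le_mul_volume_resonanceSet (τ ξ η L L' M K : ℝ) :
    volume {p : ℝ × ℝ × ℝ |
        |p.1 - p.2.1 ^ 3 - p.2.2 ^ 3| ≤ L ∧
        |τ - p.1 - (ξ - p.2.1) ^ 3 - (η - p.2.2) ^ 3| ≤ L' ∧
        |p.2.2| ≤ M ∧ K ≤ |3 * p.2.1 ^ 2 - 3 * (ξ - p.2.1) ^ 2|} ≤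
      ENNReal.ofReal (2 * min L L') * volume (resonanceSet ξ η τ (L + L') M K) := by
  rw [Measure.volume_eq_prod]
  refine Measure.prod_le_mul_of_slice_le (measurableSet_setOfPred.2 (by fun_prop))
    (fun p hp => ⟨?_, hp.2.2⟩) fun q _ => (measure_mono ?_).trans
      (volume_abs_sub_le_and_abs_sub_le (q.1 ^ 3 + q.2 ^ 3)
        (τ - (ξ - q.1) ^ 3 - (η - q.2) ^ 3) L L')
  · calc |p.2.1 ^ 3 + (ξ - p.2.1) ^ 3 + (p.2.2 ^ 3 + (η - p.2.2) ^ 3 - τ)|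
        = |(p.1 - p.2.1 ^ 3 - p.2.2 ^ 3) + (τ - p.1 - (ξ - p.2.1) ^ 3 - (η - p.2.2) ^ 3)| := by
          rw [← abs_neg]; ring_nf
      _ ≤ L + L' := (abs_add_le _ _).trans (add_le_add hp.1 hp.2.1)
  · rintro t ⟨ht₁, ht₂, -⟩
    refine ⟨by rwa [← sub_sub], ?_⟩
    rw [abs_sub_comm]
    convert ht₂ using 2
    ring

/-- measure bound for the intersection of modulation-localized supports for the
dispersion relation `τ = ξ³ + η³`: with `E` as below (coordinates `(τ₁, ξ₁, η₁)`),
`|E| ≤ C M min(L,L') max(L,L')/K`. -/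
theorem modulation_support_measure_bound :
    ∃ C : ℝ, 0 < C ∧ ∀ N M L L' K τ ξ η : ℝ,
      1 ≤ N → 1 ≤ M → 1 ≤ L → 1 ≤ L' → 0 < K →
      volume {p : ℝ × ℝ × ℝ |
          |p.1 - p.2.1 ^ 3 - p.2.2 ^ 3| ≤ L ∧
          |τ - p.1 - (ξ - p.2.1) ^ 3 - (η - p.2.2) ^ 3| ≤ L' ∧
          |p.2.2| ≤ M ∧
          K ≤ |3 * p.2.1 ^ 2 - 3 * (ξ - p.2.1) ^ 2|}
        ≤ ENNReal.ofReal (C * M * min L L' * max L L' / K) := by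
  refine ⟨32, by norm_num, fun N M L L' K τ ξ η _ hM hL hL' hK => ?_⟩
  have hconst : 2 * min L L' * (4 * (L + L') / K * (2 * M)) ≤
      32 * M * min L L' * max L L' / K := by
    rw [← min_add_max L L', le_div_iff₀ hK]
    field_simp
    nlinarith [min_le_max (a := L) (b := L'), le_min hL hL']
  calc _ ≤ ENNReal.ofReal (2 * min L L') * volume (resonanceSet ξ η τ (L + L') M K) :=
        volume_le_mul_volume_resonanceSet τ ξ η L L' M K
    _ ≤ ENNReal.ofReal (2 * min L L') *
          (ENNReal.ofReal (4 * (L + L') / K) * ENNReal.ofReal (2 * M)) := by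
        gcongr
        exact volume_resonanceSet_le ξ η τ _ M K (by positivity) hK
    _ ≤ _ := by
        rw [← ENNReal.ofReal_mul (by positivity), ← ENNReal.ofReal_mul (by positivity)]
        exact ENNReal.ofReal_le_ofReal hconst
end
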